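/- arXiv:2212.01444 — 5 statements merged into one kernel-verified Lean document; each statement's English description precedes it below -/
import Mathlib

section
/- Parameter monotonicity and positive invariance of the time governor. Let s_min ≤ s_max be real numbers, k > 0 a constant, g : [0,∞) → ℝ a continuous function with g(t) ≥ 0 for all t ≥ 0, and let s : [0,∞) → ℝ be differentiable with s'(t) = min(g(t), k·(s_max − s(t))) for all t ≥ 0 and s(0) ∈ [s_min, s_max]. Then s is monotone nondecreasing on [0,∞) and s(t) ∈ [s_min, s_max] for all t ≥ 0. -/
open Set

/-- Grönwall's inequality with `δ = ε = 0`, applied to `s - c`, makes `s ≤ c` forward invariant. -/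
theorem le_of_hasDerivAt_le_mul_sub {s s' : ℝ → ℝ} {a c K : ℝ}
    (hs : ∀ t, a ≤ t → HasDerivAt s (s' t) t) (hs' : ∀ t, a ≤ t → s' t ≤ K * (c - s t))
    (ha : s a ≤ c) {t : ℝ} (ht : a ≤ t) : s t ≤ c := by
  have hderiv : ∀ x ∈ Ico a t, HasDerivAt (fun y => s y - c) (s' x) x := fun x hx =>
    (hs x hx.1).sub_const c
  have hcont : ContinuousOn (fun y => s y - c) (Icc a t) := fun x hx =>
    ((hs x hx.1).sub_const c).continuousAt.continuousWithinAt
  have key := le_gronwallBound_of_liminf_deriv_right_le (K := -K) (ε := 0) hcont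
    (fun x hx _ hr => ((hderiv x hx).hasDerivWithinAt.liminf_right_slope_le hr))
    (sub_nonpos.2 ha) (fun x hx => by linarith [hs' x hx.1]) t (right_mem_Icc.2 ht)
  rw [gronwallBound_ε0_δ0] at key
  linarith

theorem time_governor_monotone_and_invariant_general
    (smin smax k : ℝ) (hk : 0 < k)
    (g : ℝ → ℝ) (s : ℝ → ℝ)
    (hg_nonneg : ∀ t : ℝ, 0 ≤ t → 0 ≤ g t)
    (hs : ∀ t : ℝ, 0 ≤ t → HasDerivAt s (min (g t) (k * (smax - s t))) t)
    (h0 : s 0 ∈ Set.Icc smin smax) :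
    MonotoneOn s (Set.Ici 0) ∧ ∀ t : ℝ, 0 ≤ t → s t ∈ Set.Icc smin smax := by
  have hle_smax : ∀ t, 0 ≤ t → s t ≤ smax := fun t ht =>
    le_of_hasDerivAt_le_mul_sub hs (fun _ _ => min_le_right _ _) h0.2 ht
  have hmono : MonotoneOn s (Ici 0) := by
    refine monotoneOn_of_hasDerivWithinAt_nonneg (convex_Ici 0)
      (fun t ht => (hs t ht).continuousAt.continuousWithinAt)
      (fun t ht => (hs t (interior_subset ht : 0 ≤ t)).hasDerivWithinAt) fun t ht => ?_
    have ht : 0 ≤ t := interior_subset ht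
    exact le_min (hg_nonneg t ht) (mul_nonneg hk.le (sub_nonneg.2 (hle_smax t ht)))
  exact ⟨hmono, fun t ht =>
    ⟨h0.1.trans (hmono self_mem_Ici ht ht), hle_smax t ht⟩⟩

/-- Parameter monotonicity and positive invariance of the time governor. -/
theorem time_governor_monotone_and_invariant
    (smin smax k : ℝ) (hle : smin ≤ smax) (hk : 0 < k)
    (g : ℝ → ℝ) (s : ℝ → ℝ)
    (hg_cont : ContinuousOn g (Set.Ici 0))
    (hg_nonneg : ∀ t : ℝ, 0 ≤ t → 0 ≤ g t)
    (hs : ∀ t : ℝ, 0 ≤ t → HasDerivAt s (min (g t) (k * (smax - s t))) t)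
    (h0 : s 0 ∈ Set.Icc smin smax) :
    MonotoneOn s (Set.Ici 0) ∧ ∀ t : ℝ, 0 ≤ t → s t ∈ Set.Icc smin smax :=
  time_governor_monotone_and_invariant_general smin smax k hk g s hg_nonneg hs h0
end

section
/- Convergence of the time-governed path parameter under persistently positive safety level (convergence mechanism of Proposition 2). Let s_max ∈ ℝ, k₁, k₂ > 0 constants, σ : [0,∞) → ℝ continuous with σ(t) ≥ 0 for all t, and let s : [0,∞) → ℝ be differentiable with s'(t) = min(k₁·σ(t), k₂·(s_max − s(t))) for all t ≥ 0 and s(0) ≤ s_max. If there exist T ≥ 0 and δ > 0 such that σ(t) ≥ δ for all t ≥ T, then s(t) → s_max as t → ∞. -/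
/-- Convergence of the time-governed path parameter under persistently positive
safety level (convergence mechanism of Proposition 2). -/
theorem time_governor_parameter_convergence
    (smax k₁ k₂ : ℝ) (hk₁ : 0 < k₁) (hk₂ : 0 < k₂)
    (σ : ℝ → ℝ) (s : ℝ → ℝ)
    (hσ_cont : ContinuousOn σ (Set.Ici 0))
    (hσ_nonneg : ∀ t : ℝ, 0 ≤ t → 0 ≤ σ t)
    (hs : ∀ t : ℝ, 0 ≤ t → HasDerivAt s (min (k₁ * σ t) (k₂ * (smax - s t))) t)
    (h0 : s 0 ≤ smax)
    (T δ : ℝ) (hT : 0 ≤ T) (hδ : 0 < δ)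
    (hpers : ∀ t : ℝ, T ≤ t → δ ≤ σ t) :
    Filter.Tendsto s Filter.atTop (nhds smax) := by
  set f : ℝ → ℝ := fun t => min (k₁ * σ t) (k₂ * (smax - s t)) with hfdef
  set g : ℝ → ℝ := fun t => smax - s t with hgdef
  have hgd : ∀ t : ℝ, 0 ≤ t → HasDerivAt g (-(f t)) t := by
    intro t ht
    simpa using (hs t ht).const_sub smax
  have hsc : ContinuousOn s (Set.Ici 0) := fun t ht =>
    (hs t ht).continuousAt.continuousWithinAt
  have hgc : ContinuousOn g (Set.Ici 0) := continuousOn_const.sub hsc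
  -- derivative helper for g t * exp (a * t)
  have hprod : ∀ (a t : ℝ), 0 ≤ t →
      HasDerivAt (fun u => g u * Real.exp (a * u))
        (-(f t) * Real.exp (a * t) + g t * (Real.exp (a * t) * (a * 1))) t := by
    intro a t ht
    exact (hgd t ht).mul ((hasDerivAt_id t).const_mul a).exp
  -- g is nonnegative on Ici 0
  have h1mono : MonotoneOn (fun t => g t * Real.exp (k₂ * t)) (Set.Ici 0) := by
    apply monotoneOn_of_deriv_nonneg (convex_Ici 0)
    · exact hgc.mul (Real.continuous_exp.comp (continuous_const.mul continuous_id)).continuousOn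
    · intro t ht
      rw [interior_Ici] at ht
      exact (hprod k₂ t ht.le).differentiableAt.differentiableWithinAt
    · intro t ht
      rw [interior_Ici] at ht
      rw [(hprod k₂ t ht.le).deriv]
      have hmin : f t ≤ k₂ * g t := min_le_right _ _
      nlinarith [Real.exp_pos (k₂ * t)]
  have hgnn : ∀ t : ℝ, 0 ≤ t → 0 ≤ g t := by
    intro t ht
    have h := h1mono (Set.self_mem_Ici) (by exact ht : t ∈ Set.Ici (0:ℝ)) ht
    have h0' : 0 ≤ g 0 := by simp [hgdef]; linarith
    simp only [mul_zero, Real.exp_zero, mul_one] at h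
    nlinarith [Real.exp_pos (k₂ * t)]
  have hfnn : ∀ t : ℝ, 0 ≤ t → 0 ≤ f t := by
    intro t ht
    exact le_min (mul_nonneg hk₁.le (hσ_nonneg t ht))
      (mul_nonneg hk₂.le (hgnn t ht))
  -- g is nonincreasing on Ici 0
  have hganti : AntitoneOn g (Set.Ici 0) := by
    apply antitoneOn_of_deriv_nonpos (convex_Ici 0) hgc
    · intro t ht
      rw [interior_Ici] at ht
      exact (hgd t ht.le).differentiableAt.differentiableWithinAt
    · intro t ht
      rw [interior_Ici] at ht
      rw [(hgd t ht.le).deriv]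
      simpa using hfnn t ht.le
  set G : ℝ := g T with hGdef
  have hG : 0 ≤ G := hgnn T hT
  set c : ℝ := min k₂ (k₁ * δ / (G + 1)) with hcdef
  have hc : 0 < c := lt_min hk₂ (div_pos (mul_pos hk₁ hδ) (by linarith))
  have hkey : ∀ t : ℝ, T ≤ t → c * g t ≤ f t := by
    intro t ht
    have ht0 : (0:ℝ) ≤ t := le_trans hT ht
    have hgt : g t ≤ G := hganti (by exact hT : T ∈ Set.Ici (0:ℝ)) ht0 ht
    have hgtnn : 0 ≤ g t := hgnn t ht0
    have hc1 : c ≤ k₂ := min_le_left _ _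
    have hc2 : c ≤ k₁ * δ / (G + 1) := min_le_right _ _
    have hc2' : c * (G + 1) ≤ k₁ * δ := by
      rw [← le_div_iff₀ (by linarith : (0:ℝ) < G + 1)]; exact hc2
    have hσt : δ ≤ σ t := hpers t ht
    have hgg : smax - s t = g t := rfl
    refine le_min ?_ ?_
    · nlinarith
    · rw [hgg]; nlinarith
  -- exponential decay on Ici T
  have h2anti : AntitoneOn (fun t => g t * Real.exp (c * t)) (Set.Ici T) := by
    apply antitoneOn_of_deriv_nonpos (convex_Ici T)
    · exact (hgc.mono (Set.Ici_subset_Ici.mpr hT)).mul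
        (Real.continuous_exp.comp (continuous_const.mul continuous_id)).continuousOn
    · intro t ht
      rw [interior_Ici] at ht
      exact (hprod c t (le_trans hT ht.le)).differentiableAt.differentiableWithinAt
    · intro t ht
      rw [interior_Ici] at ht
      rw [(hprod c t (le_trans hT ht.le)).deriv]
      have := hkey t ht.le
      nlinarith [Real.exp_pos (c * t)]
  have hbound : ∀ t : ℝ, T ≤ t → g t ≤ (G * Real.exp (c * T)) * Real.exp (-(c * t)) := by
    intro t ht
    have h := h2anti (Set.self_mem_Ici) (by exact ht : t ∈ Set.Ici T) ht
    rw [Real.exp_neg, ← div_eq_mul_inv, le_div_iff₀ (Real.exp_pos _)]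
    simpa [mul_comm] using h
  have hu : Filter.Tendsto (fun t => (G * Real.exp (c * T)) * Real.exp (-(c * t)))
      Filter.atTop (nhds 0) := by
    have h1 : Filter.Tendsto (fun t : ℝ => -(c * t)) Filter.atTop Filter.atBot := by
      exact (Filter.tendsto_neg_atTop_atBot).comp (Filter.Tendsto.const_mul_atTop hc Filter.tendsto_id)
    have h2 : Filter.Tendsto (fun t : ℝ => Real.exp (-(c * t))) Filter.atTop (nhds 0) :=
      Real.tendsto_exp_atBot.comp h1
    simpa using h2.const_mul (G * Real.exp (c * T))
  have hgto : Filter.Tendsto g Filter.atTop (nhds 0) := by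
    apply squeeze_zero' ?_ ?_ hu
    · filter_upwards [Filter.eventually_ge_atTop (0:ℝ)] with t ht using hgnn t ht
    · filter_upwards [Filter.eventually_ge_atTop T] with t ht using hbound t ht
  have : Filter.Tendsto (fun t => smax - g t) Filter.atTop (nhds (smax - 0)) :=
    tendsto_const_nhds.sub hgto
  simp only [sub_zero] at this
  convert this using 2 with t
  simp [hgdef]
end

section
/- Vandermonde simplex containment for PhD motion prediction. Let n ≥ 1, λ₁, …, λ_n < 0 be real numbers, and let c₀, …, c_{n−1} ∈ ℝ be determined by ∏_{k=1}^n (X − λ_k) = X^n + Σ_{k=0}^{n−1} c_k X^k. Let λ' be the list λ₁, …, λ_n with one occurrence of a maximal element removed, and let c'₀, …, c'_{n−1} be determined by ∏_{λ ∈ λ'} (X − λ) = Σ_{k=0}^{n−1} c'_k X^k (so c'_{n−1} = 1). Let g ∈ ℝ^d and let x : ℝ → ℝ^d be an n-times continuously differentiable function satisfying x^{(n)}(t) = −Σ_{k=1}^{n−1} c_k·x^{(k)}(t) − c₀·(x(t) − g) for all t ≥ 0. Then for all t ≥ 0, x(t) lies in the convex hull of the finite set {g} ∪ { Σ_{k=0}^m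 (c'_k/c'_0)·x^{(k)}(0) : 0 ≤ m ≤ n−1 }. -/
/-!
Put `e = x - g` and `p = (X - λ_max) q` with `q = ∏_{λ ∈ λ'} (X - λ)`, so that `p(d/dt) e = 0`.
Peeling off a root `μ` of `q` replaces `e` by `ê = e' - μ e`, which solves the equation of one
order less; by induction `ê` stays in its own simplex. The coefficients of `q` are positive, and
`(-μ)⁻¹` times the `m`-th vertex of the simplex of `ê` is a convex combination of the `m`-th and
`(m+1)`-st vertices of the simplex of `e`. So `e' = μ (e - f)` with `f = (-μ)⁻¹ ê` confined to the
closed convex simplex of `e`, which is therefore forward invariant: for a functional `ℓ < u` on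
the simplex, `exp (-μ t) (ℓ (e t) - u)` is nonincreasing, hence stays `≤ 0`.
-/

open Polynomial
open scoped Pointwise

namespace VandermondeSimplex

noncomputable section

variable {E : Type*} [NormedAddCommGroup E] [NormedSpace ℝ E]

def rootPoly (s : Multiset ℝ) : ℝ[X] := (s.map fun a => X - C a).prod

@[simp]
lemma rootPoly_zero : rootPoly 0 = 1 := by simp [rootPoly]

lemma rootPoly_cons (a : ℝ) (s : Multiset ℝ) : rootPoly (a ::ₘ s) = (X - C a) * rootPoly s := by
  simp [rootPoly]

lemma natDegree_rootPoly (s : Multiset ℝ) : (rootPoly s).natDegree = Multiset.card s :=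
  natDegree_multiset_prod_X_sub_C_eq_card s

lemma coeff_zero_X_sub_C_mul (a : ℝ) (q : ℝ[X]) : ((X - C a) * q).coeff 0 = -a * q.coeff 0 := by
  simp [mul_coeff_zero]

lemma coeff_rootPoly_nonneg {s : Multiset ℝ} (hs : ∀ a ∈ s, a < 0) (k : ℕ) :
    0 ≤ (rootPoly s).coeff k := by
  induction s using Multiset.induction_on generalizing k with
  | empty => rw [rootPoly_zero, coeff_one]; split_ifs <;> norm_num
  | cons a s ih =>
    have ha := hs a (Multiset.mem_cons_self a s)
    have ih := ih fun b hb => hs b (Multiset.mem_cons_of_mem hb)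
    rw [rootPoly_cons]
    cases k with
    | zero => rw [coeff_zero_X_sub_C_mul]; nlinarith [ih 0]
    | succ k => rw [coeff_X_sub_C_mul]; nlinarith [ih k, ih (k + 1)]

lemma coeff_rootPoly_pos {s : Multiset ℝ} (hs : ∀ a ∈ s, a < 0) {k : ℕ}
    (hk : k ≤ Multiset.card s) : 0 < (rootPoly s).coeff k := by
  induction s using Multiset.induction_on generalizing k with
  | empty =>
    obtain rfl : k = 0 := by simpa using hk
    simp
  | cons a s ih =>
    have ha := hs a (Multiset.mem_cons_self a s)
    have hs' : ∀ b ∈ s, b < 0 := fun b hb => hs b (Multiset.mem_cons_of_mem hb)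
    rw [rootPoly_cons]
    cases k with
    | zero => rw [coeff_zero_X_sub_C_mul]; nlinarith [ih hs' (Nat.zero_le _)]
    | succ k =>
      rw [coeff_X_sub_C_mul]
      nlinarith [ih hs' (by simpa using hk), coeff_rootPoly_nonneg hs' (k + 1)]

/-- With `a = (iteratedDeriv · e t)` and `m ≥ p.natDegree`, this is `p(d/dt) e` at `t`. -/
def partialEval (p : ℝ[X]) (a : ℕ → E) (m : ℕ) : E :=
  ∑ k ∈ Finset.range (m + 1), p.coeff k • a k

lemma partialEval_zero_right (p : ℝ[X]) (a : ℕ → E) : partialEval p a 0 = p.coeff 0 • a 0 := by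
  simp [partialEval]

lemma partialEval_succ (p : ℝ[X]) (a : ℕ → E) (m : ℕ) :
    partialEval p a (m + 1) = partialEval p a m + p.coeff (m + 1) • a (m + 1) :=
  Finset.sum_range_succ _ _

lemma partialEval_congr {p : ℝ[X]} {a b : ℕ → E} {m : ℕ} (h : ∀ k ≤ m, a k = b k) :
    partialEval p a m = partialEval p b m :=
  Finset.sum_congr rfl fun k hk => by rw [h k (Nat.lt_succ_iff.mp (Finset.mem_range.mp hk))]

def shiftSub (μ : ℝ) (a : ℕ → E) (k : ℕ) : E := a (k + 1) - μ • a k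

lemma partialEval_X_sub_C_mul_add (μ : ℝ) (q : ℝ[X]) (a : ℕ → E) (m : ℕ) :
    partialEval ((X - C μ) * q) a m + q.coeff m • a (m + 1) = partialEval q (shiftSub μ a) m := by
  induction m with
  | zero => simp only [partialEval_zero_right, coeff_zero_X_sub_C_mul, shiftSub]; module
  | succ m ih =>
    rw [partialEval_succ, partialEval_succ, ← ih, coeff_X_sub_C_mul, shiftSub]; module

lemma partialEval_X_sub_C_mul_of_natDegree_le {q : ℝ[X]} {m : ℕ} (hq : q.natDegree ≤ m) (μ : ℝ)
    (a : ℕ → E) : partialEval ((X - C μ) * q) a (m + 1) = partialEval q (shiftSub μ a) m := by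
  rw [partialEval_succ, coeff_X_sub_C_mul, coeff_eq_zero_of_natDegree_lt (Nat.lt_succ_of_le hq),
    ← partialEval_X_sub_C_mul_add]
  simp

def vertex (p : ℝ[X]) (a : ℕ → E) (m : ℕ) : E := (p.coeff 0)⁻¹ • partialEval p a m

lemma vertex_zero {p : ℝ[X]} (hp : p.coeff 0 ≠ 0) (a : ℕ → E) : vertex p a 0 = a 0 := by
  simp [vertex, partialEval_zero_right, smul_smul, hp]

lemma smul_vertex_mem_segment {μ : ℝ} (hμ : μ < 0) {q : ℝ[X]} {m : ℕ} (hq0 : 0 < q.coeff 0)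
    (hqm : 0 < q.coeff m) (hqm' : 0 ≤ q.coeff (m + 1)) (a : ℕ → E) :
    (-μ)⁻¹ • vertex q (shiftSub μ a) m ∈
      segment ℝ (vertex ((X - C μ) * q) a m) (vertex ((X - C μ) * q) a (m + 1)) := by
  have hpm : q.coeff m ≤ ((X - C μ) * q).coeff (m + 1) := by
    rw [coeff_X_sub_C_mul]; nlinarith
  have hpm' : ((X - C μ) * q).coeff (m + 1) ≠ 0 := (hqm.trans_le hpm).ne'
  -- Both sides equal `p₀⁻¹ • (partialEval p a m + q_m • a (m + 1))`, where `p₀ = -μ q₀`.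
  set θ := q.coeff m / ((X - C μ) * q).coeff (m + 1) with hθ
  refine ⟨1 - θ, θ, sub_nonneg.2 ((div_le_one (hqm.trans_le hpm)).2 hpm),
    div_nonneg hqm.le (hqm.le.trans hpm), by ring, ?_⟩
  rw [vertex, vertex, vertex, partialEval_succ, ← partialEval_X_sub_C_mul_add,
    coeff_zero_X_sub_C_mul, hθ]
  match_scalars
  · field_simp [hq0.ne', hμ.ne]; ring
  · field_simp [hq0.ne', hμ.ne]

lemma vertex_eq_sum_div (p : ℝ[X]) (a : ℕ → E) (m : ℕ) :
    vertex p a m = ∑ k ∈ Finset.range (m + 1), (p.coeff k / p.coeff 0) • a k := by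
  simp only [vertex, partialEval, Finset.smul_sum, smul_smul, div_eq_inv_mul]

def vandermondeSimplex (p : ℝ[X]) (a : ℕ → E) (n : ℕ) : Set E :=
  convexHull ℝ (insert 0 (Set.range fun m : Fin n => vertex p a m))

section Simplex

variable {p : ℝ[X]} {a b : ℕ → E} {n : ℕ}

lemma convex_vandermondeSimplex : Convex ℝ (vandermondeSimplex p a n) := convex_convexHull ℝ _

lemma isClosed_vandermondeSimplex : IsClosed (vandermondeSimplex p a n) :=
  ((Set.finite_range _).insert 0).isClosed_convexHull (𝕜 := ℝ)

lemma zero_mem_vandermondeSimplex : 0 ∈ vandermondeSimplex p a n :=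
  subset_convexHull ℝ _ (Set.mem_insert _ _)

lemma vertex_mem_vandermondeSimplex {m : ℕ} (hm : m < n) :
    vertex p a m ∈ vandermondeSimplex p a n :=
  subset_convexHull ℝ _ (Set.mem_insert_of_mem _ ⟨⟨m, hm⟩, rfl⟩)

lemma apply_zero_mem_vandermondeSimplex (hp : p.coeff 0 ≠ 0) (hn : 0 < n) :
    a 0 ∈ vandermondeSimplex p a n := by
  have := vertex_mem_vandermondeSimplex (p := p) (a := a) hn
  rwa [vertex_zero hp] at this

lemma vandermondeSimplex_congr (h : ∀ k < n, a k = b k) :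
    vandermondeSimplex p a n = vandermondeSimplex p b n := by
  have hv : (fun m : Fin n => vertex p a m) = fun m : Fin n => vertex p b m :=
    funext fun m : Fin n => congrArg _ (partialEval_congr fun k hk => h k (hk.trans_lt m.isLt))
  simp only [vandermondeSimplex, hv]

lemma smul_vandermondeSimplex_subset {μ : ℝ} (hμ : μ < 0) {q : ℝ[X]} (hq : ∀ k, 0 ≤ q.coeff k)
    (hqn : ∀ k < n, 0 < q.coeff k) (a : ℕ → E) :
    (-μ)⁻¹ • vandermondeSimplex q (shiftSub μ a) n ⊆
      vandermondeSimplex ((X - C μ) * q) a (n + 1) := by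
  rw [vandermondeSimplex, ← convexHull_smul, Set.smul_set_insert, smul_zero, Set.smul_set_range]
  refine convexHull_min (Set.insert_subset zero_mem_vandermondeSimplex ?_)
    convex_vandermondeSimplex
  rintro _ ⟨m, rfl⟩
  exact convex_vandermondeSimplex.segment_subset
    (vertex_mem_vandermondeSimplex (Nat.lt_succ_of_lt m.isLt))
    (vertex_mem_vandermondeSimplex (Nat.succ_lt_succ m.isLt))
    (smul_vertex_mem_segment hμ (hqn 0 m.pos) (hqn m m.isLt) (hq _) a)

end Simplex

lemma iteratedDeriv_deriv_sub_smul {e : ℝ → E} {k : ℕ} (he : ContDiff ℝ (k + 1) e) (μ t : ℝ) :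
    iteratedDeriv k (deriv e - μ • e) t = shiftSub μ (iteratedDeriv · e t) k := by
  have hd : ContDiff ℝ k (deriv e) := (contDiff_succ_iff_deriv.mp he).2.2
  have hs : ContDiffAt ℝ k (μ • e) t := ((he.of_le le_self_add).const_smul μ).contDiffAt
  rw [iteratedDeriv_sub hd.contDiffAt hs,
    iteratedDeriv_const_smul_field, ← iteratedDeriv_succ']
  rfl

lemma partialEval_iteratedDeriv_deriv_sub_smul {e : ℝ → E} {N : ℕ} (he : ContDiff ℝ (N + 1) e)
    {q : ℝ[X]} (hq : q.natDegree ≤ N) (μ t : ℝ) :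
    partialEval q (iteratedDeriv · (deriv e - μ • e) t) N =
      partialEval ((X - C μ) * q) (iteratedDeriv · e t) (N + 1) := by
  rw [partialEval_X_sub_C_mul_of_natDegree_le hq]
  exact partialEval_congr fun k hk =>
    iteratedDeriv_deriv_sub_smul (he.of_le (by exact_mod_cast Nat.succ_le_succ hk)) μ t

lemma le_of_hasDerivAt_eq_mul_sub {ψ h : ℝ → ℝ} {μ u : ℝ} (hμ : μ ≤ 0)
    (hψ : ∀ s, 0 ≤ s → HasDerivAt ψ (μ * (ψ s - h s)) s) (hh : ∀ s, 0 ≤ s → h s ≤ u)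
    (h0 : ψ 0 ≤ u) {t : ℝ} (ht : 0 ≤ t) : ψ t ≤ u := by
  set φ : ℝ → ℝ := fun s => Real.exp (-μ * s) * (ψ s - u)
  have hφ : ∀ s, 0 ≤ s → HasDerivAt φ (Real.exp (-μ * s) * (μ * (u - h s))) s := by
    intro s hs
    have hexp : HasDerivAt (fun s => Real.exp (-μ * s)) (Real.exp (-μ * s) * -μ) s := by
      simpa using ((hasDerivAt_id s).const_mul (-μ)).exp
    exact (hexp.mul ((hψ s hs).sub_const u)).congr_deriv (by ring)
  have hanti : AntitoneOn φ (Set.Ici 0) :=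
    antitoneOn_of_hasDerivWithinAt_nonpos (convex_Ici 0)
      (fun s hs => (hφ s hs).continuousAt.continuousWithinAt)
      (fun s hs => (hφ s (interior_subset hs)).hasDerivWithinAt)
      (fun s hs => mul_nonpos_of_nonneg_of_nonpos (Real.exp_pos _).le
        (mul_nonpos_of_nonpos_of_nonneg hμ (sub_nonneg.2 (hh s (interior_subset hs)))))
  have hφt : φ t ≤ φ 0 := hanti Set.self_mem_Ici ht ht
  simp only [φ, mul_zero, Real.exp_zero, one_mul] at hφt
  nlinarith [Real.exp_pos (-μ * t)]

theorem mem_of_hasDerivAt_eq_smul_sub {K : Set E} (hK : Convex ℝ K) (hKc : IsClosed K) {μ : ℝ}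
    (hμ : μ ≤ 0) {e f : ℝ → E} (he : ∀ s, 0 ≤ s → HasDerivAt e (μ • (e s - f s)) s)
    (hf : ∀ s, 0 ≤ s → f s ∈ K) (h0 : e 0 ∈ K) {t : ℝ} (ht : 0 ≤ t) : e t ∈ K := by
  by_contra hout
  obtain ⟨ℓ, u, hℓK, hu⟩ := geometric_hahn_banach_closed_point hK hKc hout
  refine hu.not_ge (le_of_hasDerivAt_eq_mul_sub (ψ := fun s => ℓ (e s)) (h := fun s => ℓ (f s))
    hμ (fun s hs => ?_) (fun s hs => (hℓK _ (hf s hs)).le) (hℓK _ h0).le ht)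
  have := ℓ.hasFDerivAt.comp_hasDerivAt s (he s hs)
  rw [map_smul, map_sub] at this
  exact this

lemma mem_vandermondeSimplex_cons_of_deriv_sub_smul_mem {μ : ℝ} (hμ : μ < 0) {T : Multiset ℝ}
    (hT : ∀ a ∈ T, a < 0) {e : ℝ → E} (he : ContDiff ℝ (Multiset.card T + 1 : ℕ) e)
    (hmem : ∀ s, 0 ≤ s → (deriv e - μ • e) s ∈ vandermondeSimplex (rootPoly T)
      (iteratedDeriv · (deriv e - μ • e) 0) (Multiset.card T + 1))
    {t : ℝ} (ht : 0 ≤ t) :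
    e t ∈ vandermondeSimplex (rootPoly (μ ::ₘ T)) (iteratedDeriv · e 0) (Multiset.card T + 2) := by
  have hs : ∀ a ∈ μ ::ₘ T, a < 0 := Multiset.forall_mem_cons.2 ⟨hμ, hT⟩
  have hf : ∀ s, 0 ≤ s → (-μ)⁻¹ • (deriv e - μ • e) s ∈
      vandermondeSimplex (rootPoly (μ ::ₘ T)) (iteratedDeriv · e 0) (Multiset.card T + 2) := by
    intro s hs
    rw [rootPoly_cons]
    refine smul_vandermondeSimplex_subset hμ (coeff_rootPoly_nonneg hT)
      (fun k hk => coeff_rootPoly_pos hT (Nat.lt_succ_iff.mp hk)) _ (Set.smul_mem_smul_set ?_)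
    rw [← vandermondeSimplex_congr fun k hk =>
      iteratedDeriv_deriv_sub_smul (he.of_le (by exact_mod_cast hk)) μ 0]
    exact hmem s hs
  refine mem_of_hasDerivAt_eq_smul_sub convex_vandermondeSimplex isClosed_vandermondeSimplex hμ.le
    (e := e) (fun s _ => ?_) hf
    (apply_zero_mem_vandermondeSimplex (coeff_rootPoly_pos hs (Nat.zero_le _)).ne' (Nat.succ_pos _))
    ht
  convert (he.differentiable (by simp) s).hasDerivAt using 1
  simp only [Pi.sub_apply, Pi.smul_apply, smul_sub, smul_smul]
  match_scalars
  · field_simp [hμ.ne]; ring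
  · field_simp [hμ.ne]

theorem mem_vandermondeSimplex_of_ode {s : Multiset ℝ} (hs : ∀ a ∈ s, a < 0) {M : ℝ} (hM : M ≤ 0)
    {e : ℝ → E} (he : ContDiff ℝ (Multiset.card s + 1 : ℕ) e)
    (hode : ∀ t, 0 ≤ t → partialEval ((X - C M) * rootPoly s) (iteratedDeriv · e t)
      (Multiset.card s + 1) = 0)
    {t : ℝ} (ht : 0 ≤ t) :
    e t ∈ vandermondeSimplex (rootPoly s) (iteratedDeriv · e 0) (Multiset.card s + 1) := by
  induction s using Multiset.induction_on generalizing e t with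
  | empty =>
    refine mem_of_hasDerivAt_eq_smul_sub convex_vandermondeSimplex isClosed_vandermondeSimplex hM
      (f := 0) (fun s hs => ?_) (fun _ _ => zero_mem_vandermondeSimplex)
      (apply_zero_mem_vandermondeSimplex (by simp) one_pos) ht
    have h := hode s hs
    rw [Multiset.card_zero, rootPoly_zero, partialEval_X_sub_C_mul_of_natDegree_le natDegree_one.le,
      partialEval_zero_right, coeff_one_zero, one_smul, shiftSub, iteratedDeriv_one,
      iteratedDeriv_zero, sub_eq_zero] at h
    simpa [h] using (he.differentiable (by simp) s).hasDerivAt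
  | cons μ T ih =>
    have hT : ∀ a ∈ T, a < 0 := fun a ha => hs a (Multiset.mem_cons_of_mem ha)
    rw [Multiset.card_cons] at he hode ⊢
    have he' : ContDiff ℝ (Multiset.card T + 1 + 1) e := by exact_mod_cast he
    refine mem_vandermondeSimplex_cons_of_deriv_sub_smul_mem (hs μ (Multiset.mem_cons_self μ T)) hT
      (he'.of_le le_self_add) (fun s hs => ih hT ?_ ?_ hs) ht
    · exact (contDiff_succ_iff_deriv.mp he').2.2.sub ((he'.of_le le_self_add).const_smul μ)
    · intro s hs
      have hdeg : ((X - C M) * rootPoly T).natDegree ≤ Multiset.card T + 1 := by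
        rw [← rootPoly_cons, natDegree_rootPoly, Multiset.card_cons]
      rw [partialEval_iteratedDeriv_deriv_sub_smul he' hdeg, mul_left_comm, ← rootPoly_cons]
      exact hode s hs

lemma partialEval_sub (p : ℝ[X]) (a b : ℕ → E) (m : ℕ) :
    partialEval p (a - b) m = partialEval p a m - partialEval p b m := by
  simp [partialEval, smul_sub, Finset.sum_sub_distrib]

lemma partialEval_single_zero (p : ℝ[X]) (g : E) (m : ℕ) :
    partialEval p (Pi.single 0 g) m = p.coeff 0 • g := by
  rw [partialEval, Finset.sum_eq_single 0 (fun k _ hk => by simp [hk]) (by simp)]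
  simp

lemma vertex_sub_single_zero {p : ℝ[X]} (hp : p.coeff 0 ≠ 0) (a : ℕ → E) (g : E) (m : ℕ) :
    vertex p (a - Pi.single 0 g) m = vertex p a m - g := by
  rw [vertex, vertex, partialEval_sub, partialEval_single_zero, smul_sub, smul_smul,
    inv_mul_cancel₀ hp, one_smul]

lemma vadd_vandermondeSimplex_sub_single_zero {p : ℝ[X]} (hp : p.coeff 0 ≠ 0) (a : ℕ → E) (g : E)
    (n : ℕ) : g +ᵥ vandermondeSimplex p (a - Pi.single 0 g) n =
      convexHull ℝ (insert g (Set.range fun m : Fin n => vertex p a m)) := by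
  rw [vandermondeSimplex, ← convexHull_vadd, Set.vadd_set_insert, vadd_eq_add, add_zero,
    Set.vadd_set_range]
  simp [vertex_sub_single_zero hp]

lemma iteratedDeriv_sub_const_eq {𝕜 F : Type*} [NontriviallyNormedField 𝕜] [NormedAddCommGroup F]
    [NormedSpace 𝕜 F] (f : 𝕜 → F) (g : F) (t : 𝕜) :
    (iteratedDeriv · (fun s => f s - g) t) = (iteratedDeriv · f t) - Pi.single 0 g := by
  funext k
  cases k with
  | zero => simp
  | succ k => simp [iteratedDeriv_succ', deriv_sub_const_fun]

lemma partialEval_X_pow_add_sum_sub_single_zero {n : ℕ} (hn : 0 < n) (c : ℕ → ℝ) (a : ℕ → E)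
    (g : E) : partialEval (X ^ n + ∑ i ∈ Finset.range n, C (c i) * X ^ i) (a - Pi.single 0 g) n =
      a n + ∑ k ∈ Finset.Ico 1 n, c k • a k + c 0 • (a 0 - g) := by
  have hIco : ∀ k ∈ Finset.Ico 1 n, (X ^ n + ∑ i ∈ Finset.range n, C (c i) * X ^ i).coeff k •
      (a - Pi.single 0 g : ℕ → E) k = c k • a k := fun k hk => by
    obtain ⟨hk1, hkn⟩ := Finset.mem_Ico.mp hk
    simp [coeff_X_pow, hkn, hkn.ne, Nat.one_le_iff_ne_zero.mp hk1]
  rw [partialEval, Finset.sum_range_succ, Finset.sum_range_eq_add_Ico _ hn,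
    Finset.sum_congr rfl hIco]
  simp [coeff_X_pow, hn, hn.ne]
  abel

end

end VandermondeSimplex

open VandermondeSimplex

theorem phd_vandermonde_simplex_containment_general {d n : ℕ}
    (lam : Fin n → ℝ) (hlam : ∀ k, lam k < 0)
    (c c' : ℕ → ℝ)
    (hc : ∏ k : Fin n, (X - C (lam k)) =
      X ^ n + ∑ k ∈ Finset.range n, C (c k) * X ^ k)
    (j : Fin n)
    (hc' : ∏ k ∈ Finset.univ.erase j, (X - C (lam k)) =
      ∑ k ∈ Finset.range n, C (c' k) * X ^ k)
    (g : EuclideanSpace ℝ (Fin d)) (x : ℝ → EuclideanSpace ℝ (Fin d))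
    (hx : ContDiff ℝ (n : ℕ∞) x)
    (hode : ∀ t : ℝ, 0 ≤ t →
      iteratedDeriv n x t =
        -(∑ k ∈ Finset.Ico 1 n, c k • iteratedDeriv k x t) - c 0 • (x t - g)) :
    ∀ t : ℝ, 0 ≤ t →
      x t ∈ convexHull ℝ (insert g (Set.range fun m : Fin n =>
        ∑ k ∈ Finset.range ((m : ℕ) + 1), (c' k / c' 0) • iteratedDeriv k x 0)) := by
  intro t ht
  set s : Multiset ℝ := (Finset.univ.erase j).val.map lam
  have hs : ∀ a ∈ s, a < 0 := Multiset.forall_mem_map_iff.2 fun k _ => hlam k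
  have hcard : Multiset.card s + 1 = n := by simp [s, Nat.sub_add_cancel j.pos]
  have hq : rootPoly s = ∏ k ∈ Finset.univ.erase j, (X - C (lam k)) := by
    rw [Finset.prod_eq_multiset_prod, rootPoly, Multiset.map_map]; rfl
  have hp : (X - C (lam j)) * rootPoly s = X ^ n + ∑ k ∈ Finset.range n, C (c k) * X ^ k := by
    rw [hq, Finset.mul_prod_erase _ (fun k => X - C (lam k)) (Finset.mem_univ j), hc]
  have hq_coeff : ∀ k < n, (rootPoly s).coeff k = c' k := fun k hk => by simp [hq, hc', hk]
  have hq0 : (rootPoly s).coeff 0 ≠ 0 := (coeff_rootPoly_pos hs (Nat.zero_le _)).ne'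
  have hode_e : ∀ t, 0 ≤ t → partialEval ((X - C (lam j)) * rootPoly s)
      (iteratedDeriv · (fun t => x t - g) t) n = 0 := by
    intro t ht
    rw [hp, iteratedDeriv_sub_const_eq, partialEval_X_pow_add_sum_sub_single_zero j.pos,
      iteratedDeriv_zero, hode t ht]
    abel
  have hmem := mem_vandermondeSimplex_of_ode hs (hlam j).le (e := fun t => x t - g)
  rw [hcard] at hmem
  have hxt := Set.vadd_mem_vadd_set (a := g) (hmem (hx.sub contDiff_const) hode_e ht)
  rw [iteratedDeriv_sub_const_eq, vadd_vandermondeSimplex_sub_single_zero hq0, vadd_eq_add,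
    add_sub_cancel] at hxt
  convert hxt using 5 with m
  rw [vertex_eq_sum_div]
  refine Finset.sum_congr rfl fun k hk => ?_
  rw [hq_coeff k ((Finset.mem_range.mp hk).trans_le m.isLt), hq_coeff 0 j.pos]

/-- Vandermonde simplex containment for PhD motion prediction: the position trajectory
of the PhD dynamics stays in the convex hull of the goal `g` and the Vandermonde
vertices `Σ_{k=0}^m (c'_k/c'_0)·x⁽ᵏ⁾(0)`, `0 ≤ m ≤ n−1`, built from the roots with one
maximal root removed. -/
theorem phd_vandermonde_simplex_containment {d n : ℕ} (hn : 1 ≤ n)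
    (lam : Fin n → ℝ) (hlam : ∀ k, lam k < 0)
    (c c' : ℕ → ℝ)
    (hc : ∏ k : Fin n, (X - C (lam k)) =
      X ^ n + ∑ k ∈ Finset.range n, C (c k) * X ^ k)
    (j : Fin n) (hj : ∀ k, lam k ≤ lam j)
    (hc' : ∏ k ∈ Finset.univ.erase j, (X - C (lam k)) =
      ∑ k ∈ Finset.range n, C (c' k) * X ^ k)
    (g : EuclideanSpace ℝ (Fin d)) (x : ℝ → EuclideanSpace ℝ (Fin d))
    (hx : ContDiff ℝ (n : ℕ∞) x)
    (hode : ∀ t : ℝ, 0 ≤ t →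
      iteratedDeriv n x t =
        -(∑ k ∈ Finset.Ico 1 n, c k • iteratedDeriv k x t) - c 0 • (x t - g)) :
    ∀ t : ℝ, 0 ≤ t →
      x t ∈ convexHull ℝ (insert g (Set.range fun m : Fin n =>
        ∑ k ∈ Finset.range ((m : ℕ) + 1), (c' k / c' 0) • iteratedDeriv k x 0)) :=
  phd_vandermonde_simplex_containment_general lam hlam c c' hc j hc' g x hx hode
end

section
/- Lyapunov ellipsoid containment bound for the position trajectory. Let A ∈ ℝ^{N×N}, let P ∈ ℝ^{N×N} be symmetric positive definite with AᵀP + PA negative semidefinite, let B ∈ ℝ^{N×d}, and let ξ*, ξ₀ ∈ ℝ^N. Define ξ(t) = ξ* + exp(t·A)·(ξ₀ − ξ*) (the solution of ξ̇ = A(ξ − ξ*) with ξ(0) = ξ₀). Then for all t ≥ 0, ‖Bᵀ(ξ(t) − ξ*)‖ ≤ ‖BᵀP⁻¹B‖^{1/2} · √((ξ₀ − ξ*)ᵀ P (ξ₀ − ξ*)), where ‖·‖ denotes the Euclidean norm on vectors and the induced operator norm on matrices. -/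
open Matrix
open scoped RealInnerProductSpace

/-- The operator norm of a matrix induced by the Euclidean norms. -/
noncomputable def matrixOpNorm {m n : ℕ} (M : Matrix (Fin m) (Fin n) ℝ) : ℝ :=
  ‖LinearMap.toContinuousLinearMap (Matrix.toEuclideanLin M)‖

/-!
The hypothesis on `A` says that `V(x) = ⟪x, P x⟫` has nonpositive derivative along every
solution of `ẋ = A x`, so `V(ξ(t) - ξ*) ≤ V(ξ₀ - ξ*)` for `t ≥ 0`. It remains to bound
`‖Bᵀ x‖²` by `‖BᵀP⁻¹B‖ · V(x)`: writing `P = SᵀS` with `S` invertible and `C = S⁻ᵀB`, we have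
`Bᵀx = Cᵀ(Sx)`, `‖Sx‖² = V(x)` and, by the C⋆-identity, `‖C‖² = ‖CᵀC‖ = ‖BᵀP⁻¹B‖`.
-/

theorem antitone_inner_self_apply_of_hasDerivAt {E : Type*} [NormedAddCommGroup E]
    [InnerProductSpace ℝ E] (f : E → E) (P : E →L[ℝ] E)
    (hf : ∀ y, ⟪f y, P y⟫ + ⟪y, P (f y)⟫ ≤ 0) {x : ℝ → E}
    (hx : ∀ t, HasDerivAt x (f (x t)) t) :
    Antitone fun t => ⟪x t, P (x t)⟫ := by
  have hV : ∀ t, HasDerivAt (fun t => ⟪x t, P (x t)⟫)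
      (⟪x t, P (f (x t))⟫ + ⟪f (x t), P (x t)⟫) t :=
    fun t => (hx t).inner ℝ (P.hasFDerivAt.comp_hasDerivAt t (hx t))
  refine antitone_of_deriv_nonpos (fun t => (hV t).differentiableAt) fun t => ?_
  rw [(hV t).deriv, add_comm]
  exact hf _

theorem toEuclideanLin_mul_apply {l m n : Type*} [Fintype m] [DecidableEq m] [Fintype n]
    [DecidableEq n] (M : Matrix l m ℝ) (K : Matrix m n ℝ) (x : EuclideanSpace ℝ n) :
    toEuclideanLin (M * K) x = toEuclideanLin M (toEuclideanLin K x) := by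
  rw [toLpLin_mul_same, LinearMap.comp_apply]

variable {m n : Type*} [Fintype m] [DecidableEq m] [Fintype n] [DecidableEq n]

theorem hasDerivAt_toEuclideanLin_exp_smul_apply (A : Matrix n n ℝ) (v : EuclideanSpace ℝ n)
    (t : ℝ) :
    HasDerivAt (fun t : ℝ => toEuclideanLin (NormedSpace.exp (t • A)) v)
      (toEuclideanLin A (toEuclideanLin (NormedSpace.exp (t • A)) v)) t := by
  -- the L² operator norm induces the product topology, in which `exp` is taken
  open scoped Matrix.Norms.L2Operator in
  have hexp := hasDerivAt_exp_smul_const' (𝕂 := ℝ) A t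
  let evalAt : Matrix n n ℝ →L[ℝ] EuclideanSpace ℝ n :=
    (LinearMap.applyₗ v ∘ₗ (toEuclideanLin (𝕜 := ℝ)).toLinearMap).toContinuousLinearMap
  refine (evalAt.hasFDerivAt.comp_hasDerivAt t hexp).congr_deriv ?_
  exact toEuclideanLin_mul_apply A _ v

theorem inner_toEuclideanLin_add_inner_nonpos {A P : Matrix n n ℝ}
    (h : (-(Aᵀ * P + P * A)).PosSemidef) (y : EuclideanSpace ℝ n) :
    ⟪toEuclideanLin A y, toEuclideanLin P y⟫ + ⟪y, toEuclideanLin P (toEuclideanLin A y)⟫ ≤ 0 := by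
  have hsum : ⟪toEuclideanLin A y, toEuclideanLin P y⟫ + ⟪y, toEuclideanLin P (toEuclideanLin A y)⟫
      = -⟪y, toEuclideanLin (-(Aᵀ * P + P * A)) y⟫ := by
    rw [← LinearMap.adjoint_inner_right, ← toEuclideanLin_conjTranspose_eq_adjoint,
      conjTranspose_eq_transpose_of_trivial, ← toEuclideanLin_mul_apply,
      ← toEuclideanLin_mul_apply, ← inner_add_right, ← LinearMap.add_apply, ← map_add, map_neg,
      LinearMap.neg_apply, inner_neg_right, neg_neg]
  rw [hsum, neg_nonpos]
  exact (isPositive_toEuclideanLin_iff.mpr h).inner_nonneg_right y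

theorem inner_toEuclideanLin_transpose_mul_self (S : Matrix n n ℝ) (x : EuclideanSpace ℝ n) :
    ⟪x, toEuclideanLin (Sᵀ * S) x⟫ = ‖toEuclideanLin S x‖ ^ 2 := by
  rw [toEuclideanLin_mul_apply, ← conjTranspose_eq_transpose_of_trivial,
    toEuclideanLin_conjTranspose_eq_adjoint, LinearMap.adjoint_inner_right,
    real_inner_self_eq_norm_sq]

section L2Operator

open scoped Matrix.Norms.L2Operator MatrixOrder

theorem sq_norm_toEuclideanLin_transpose_mul_le (C : Matrix n m ℝ) (S : Matrix n n ℝ)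
    (x : EuclideanSpace ℝ n) :
    ‖toEuclideanLin (Cᵀ * S) x‖ ^ 2 ≤ ‖Cᵀ * C‖ * ⟪x, toEuclideanLin (Sᵀ * S) x⟫ := by
  have hC : ‖Cᵀ * C‖ = ‖C‖ ^ 2 := by
    rw [← conjTranspose_eq_transpose_of_trivial, l2_opNorm_conjTranspose_mul_self, sq]
  have hle : ‖toEuclideanLin (Cᵀ * S) x‖ ≤ ‖C‖ * ‖toEuclideanLin S x‖ := by
    rw [toEuclideanLin_mul_apply, ← l2_opNorm_conjTranspose C,
      conjTranspose_eq_transpose_of_trivial]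
    exact ((toEuclideanLin.trans LinearMap.toContinuousLinearMap) Cᵀ).le_opNorm _
  rw [hC, inner_toEuclideanLin_transpose_mul_self, ← mul_pow]
  gcongr

theorem sq_norm_toEuclideanLin_transpose_le_of_posDef {P : Matrix n n ℝ} (hP : P.PosDef)
    (B : Matrix n m ℝ) (x : EuclideanSpace ℝ n) :
    ‖toEuclideanLin Bᵀ x‖ ^ 2 ≤ ‖Bᵀ * P⁻¹ * B‖ * ⟪x, toEuclideanLin P x⟫ := by
  obtain ⟨S, hS, rfl⟩ :=
    CStarAlgebra.isStrictlyPositive_iff_eq_star_mul_self.mp hP.isStrictlyPositive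
  rw [star_eq_conjTranspose, conjTranspose_eq_transpose_of_trivial]
  have hdet : IsUnit S.det := (isUnit_iff_isUnit_det S).mp hS
  have hB : Bᵀ = ((S⁻¹)ᵀ * B)ᵀ * S := by
    rw [transpose_mul, transpose_transpose, Matrix.mul_assoc, nonsing_inv_mul _ hdet,
      Matrix.mul_one]
  have hBPB : Bᵀ * (Sᵀ * S)⁻¹ * B = ((S⁻¹)ᵀ * B)ᵀ * ((S⁻¹)ᵀ * B) := by
    rw [transpose_mul, transpose_transpose, Matrix.mul_inv_rev, transpose_nonsing_inv]
    simp only [Matrix.mul_assoc]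
  rw [hBPB]
  conv_lhs => rw [hB]
  exact sq_norm_toEuclideanLin_transpose_mul_le _ _ x

end L2Operator

/-- Lyapunov ellipsoid containment bound for the position trajectory:
along `ξ(t) = ξ* + exp(tA)(ξ₀ − ξ*)`, the projected deviation `‖Bᵀ(ξ(t) − ξ*)‖` is
bounded by the projected Lyapunov ellipsoid radius `‖BᵀP⁻¹B‖^{1/2}·‖ξ₀ − ξ*‖_P`. -/
theorem lyapunov_ellipsoid_containment {N d : ℕ}
    (A P : Matrix (Fin N) (Fin N) ℝ) (hP : P.PosDef)
    (hNeg : (-(Aᵀ * P + P * A)).PosSemidef)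
    (B : Matrix (Fin N) (Fin d) ℝ)
    (ξstar ξ0 : EuclideanSpace ℝ (Fin N))
    (ξ : ℝ → EuclideanSpace ℝ (Fin N))
    (hξ : ∀ t : ℝ, ξ t = ξstar +
      (Matrix.toEuclideanLin (NormedSpace.exp (t • A))) (ξ0 - ξstar)) :
    ∀ t : ℝ, 0 ≤ t →
      ‖(Matrix.toEuclideanLin Bᵀ) (ξ t - ξstar)‖ ≤
        Real.sqrt (matrixOpNorm (Bᵀ * P⁻¹ * B)) *
          Real.sqrt ⟪ξ0 - ξstar, (Matrix.toEuclideanLin P) (ξ0 - ξstar)⟫ := by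
  intro t ht
  set x : ℝ → EuclideanSpace ℝ (Fin N) :=
    fun s => toEuclideanLin (NormedSpace.exp (s • A)) (ξ0 - ξstar) with hx
  have hdev : ξ t - ξstar = x t := by rw [hξ, add_sub_cancel_left]
  have hx0 : x 0 = ξ0 - ξstar := by simp [hx]
  have hV : ⟪x t, toEuclideanLin P (x t)⟫ ≤ ⟪ξ0 - ξstar, toEuclideanLin P (ξ0 - ξstar)⟫ :=
    hx0 ▸ antitone_inner_self_apply_of_hasDerivAt (toEuclideanLin A)
      (LinearMap.toContinuousLinearMap (toEuclideanLin P))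
      (inner_toEuclideanLin_add_inner_nonpos hNeg)
      (hasDerivAt_toEuclideanLin_exp_smul_apply A _) ht
  have hnorm : 0 ≤ matrixOpNorm (Bᵀ * P⁻¹ * B) := norm_nonneg _
  rw [hdev, ← Real.sqrt_mul hnorm]
  refine Real.le_sqrt_of_sq_le ?_
  -- `matrixOpNorm` is definitionally the norm of `Matrix.Norms.L2Operator`
  calc ‖toEuclideanLin Bᵀ (x t)‖ ^ 2
      ≤ matrixOpNorm (Bᵀ * P⁻¹ * B) * ⟪x t, toEuclideanLin P (x t)⟫ :=
        sq_norm_toEuclideanLin_transpose_le_of_posDef hP B (x t)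
    _ ≤ _ := mul_le_mul_of_nonneg_left hV hnorm
end

section
/- Asymptotic decay of the Vandermonde simplex radius (decay part of Lemma 2). Let n ≥ 1, λ₁, …, λ_n < 0 be real numbers, c₀, …, c_{n−1} ∈ ℝ determined by ∏_{k=1}^n (X − λ_k) = X^n + Σ_{k=0}^{n−1} c_k X^k, let λ' be the list λ₁, …, λ_n with one occurrence of a maximal element removed, and c'₀, …, c'_{n−1} determined by ∏_{λ ∈ λ'} (X − λ) = Σ_{k=0}^{n−1} c'_k X^k. Let g ∈ ℝ^d and let x : ℝ → ℝ^d be an n-times continuously differentiable function satisfying x^{(n)}(t) = −Σ_{k=1}^{n−1} c_k·x^{(k)}(t) − c₀·(x(t) − g) for all t ≥ 0. Then the Vandermonde simplex radius max_{0 ≤ m ≤ n−1} ‖g − Σ_{k=0}^m (c'_k/c'_0)·x^{(k)}(t)‖ tends to 0 as t → ∞. -/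
open Polynomial

/-!
With `u = x - g`, the ODE says `p(d/dt) u = 0` for `p = ∏ (X - λ_k)`. Peeling off one
root `a` at a time, `v = u' - a u` solves the equation of the remaining factors, so by induction
all derivatives of `v` up to the order of that equation tend to `0`; then `u' = a u + v` with
`a < 0` forces `u → 0` (Grönwall for `‖u‖²`), and `u⁽ᵏ⁺¹⁾ = v⁽ᵏ⁾ + a u⁽ᵏ⁾ → 0`. Finally
`c'₀ = ∏_{k ≠ j} (-λ_k) ≠ 0` and the `k = 0` term absorbs `g`, so each vertex
`g - Σ_{k ≤ m} (c'_k / c'_0) x⁽ᵏ⁾` equals `-Σ_{k ≤ m} (c'_k / c'_0) u⁽ᵏ⁾ → 0`.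
-/

open Filter Topology

theorem tendsto_gronwallBound_atTop {δ K ε : ℝ} (hK : K < 0) :
    Tendsto (gronwallBound δ K ε) atTop (𝓝 (-ε / K)) := by
  have hexp : Tendsto (fun x => Real.exp (K * x)) atTop (𝓝 0) :=
    Real.tendsto_exp_atBot.comp (tendsto_id.const_mul_atTop_of_neg hK)
  rw [gronwallBound_of_K_ne_0 hK.ne]
  convert (hexp.const_mul δ).add ((hexp.sub_const 1).const_mul (ε / K)) using 2
  ring

section DiffOp

variable {E : Type*} [NormedAddCommGroup E] [NormedSpace ℝ E]

/-- `diffOp u t p` is `p(d/dt) u` evaluated at `t`. -/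
noncomputable def diffOp (u : ℝ → E) (t : ℝ) : ℝ[X] →ₗ[ℝ] E :=
  lsum fun k => LinearMap.toSpanSingleton ℝ E (iteratedDeriv k u t)

theorem diffOp_monomial (u : ℝ → E) (t : ℝ) (k : ℕ) (a : ℝ) :
    diffOp u t (monomial k a) = a • iteratedDeriv k u t := by
  simp [diffOp, sum_monomial_index]

theorem diffOp_C_mul_X_pow (u : ℝ → E) (t : ℝ) (k : ℕ) (a : ℝ) :
    diffOp u t (C a * X ^ k) = a • iteratedDeriv k u t := by
  rw [C_mul_X_pow_eq_monomial, diffOp_monomial]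

theorem diffOp_X_pow (u : ℝ → E) (t : ℝ) (k : ℕ) :
    diffOp u t (X ^ k) = iteratedDeriv k u t := by
  simpa using diffOp_C_mul_X_pow u t k 1

theorem diffOp_X_mul (u : ℝ → E) (t : ℝ) (p : ℝ[X]) :
    diffOp u t (X * p) = diffOp (deriv u) t p := by
  induction p using Polynomial.induction_on' with
  | add p q hp hq => rw [mul_add, map_add, map_add, hp, hq]
  | monomial k a => rw [X_mul_monomial, diffOp_monomial, diffOp_monomial, iteratedDeriv_succ']

theorem iteratedDeriv_deriv_sub_smul {u : ℝ → E} {k : ℕ} (hu : ContDiff ℝ (k + 1) u) (a : ℝ)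
    (t : ℝ) :
    iteratedDeriv k (deriv u - a • u) t =
      iteratedDeriv (k + 1) u t - a • iteratedDeriv k u t := by
  have hu' : ContDiff ℝ k u := hu.of_le (by exact_mod_cast le_self_add)
  rw [iteratedDeriv_sub (g := a • u) (contDiff_succ_iff_deriv.1 hu).2.2.contDiffAt
    (hu'.const_smul a).contDiffAt, iteratedDeriv_const_smul hu'.contDiffAt, iteratedDeriv_succ']

theorem diffOp_X_sub_C_mul {u : ℝ → E} {p : ℝ[X]} (hu : ContDiff ℝ (p.natDegree + 1) u)
    (a t : ℝ) :
    diffOp u t ((X - C a) * p) = diffOp (deriv u - a • u) t p := by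
  have hsum : ∀ v : ℝ → E, diffOp v t p = ∑ k ∈ p.support, p.coeff k • iteratedDeriv k v t :=
    fun v => by simp [diffOp, sum_def]
  rw [sub_mul, map_sub, diffOp_X_mul, C_mul', map_smul, hsum, hsum, hsum, Finset.smul_sum,
    ← Finset.sum_sub_distrib]
  refine Finset.sum_congr rfl fun k hk => ?_
  have hk : (k : WithTop ℕ∞) + 1 ≤ p.natDegree + 1 := by
    exact_mod_cast Nat.add_le_add_right (le_natDegree_of_mem_supp k hk) 1
  rw [iteratedDeriv_deriv_sub_smul (hu.of_le hk), ← iteratedDeriv_succ', smul_sub, smul_comm]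

theorem iteratedDeriv_sub_const {k : ℕ} (hk : k ≠ 0) (x : ℝ → E) (g : E) :
    iteratedDeriv k (fun t => x t - g) = iteratedDeriv k x := by
  obtain ⟨k, rfl⟩ := Nat.exists_eq_succ_of_ne_zero hk
  have hderiv : deriv (fun t => x t - g) = deriv x := funext fun t => deriv_sub_const g
  rw [iteratedDeriv_succ', iteratedDeriv_succ', hderiv]

theorem sub_sum_smul_iteratedDeriv {a : ℕ → ℝ} (ha : a 0 = 1) (x : ℝ → E) (g : E) (m : ℕ)
    (t : ℝ) :
    g - ∑ k ∈ Finset.range (m + 1), a k • iteratedDeriv k x t =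
      -∑ k ∈ Finset.range (m + 1), a k • iteratedDeriv k (fun s => x s - g) t := by
  simp only [Finset.sum_range_succ' _ m, iteratedDeriv_sub_const (Nat.succ_ne_zero _),
    iteratedDeriv_zero, ha, one_smul]
  abel

end DiffOp

section InnerProductSpace

variable {E : Type*} [NormedAddCommGroup E] [InnerProductSpace ℝ E]

theorem norm_sq_le_gronwallBound_of_hasDerivAt {u f : ℝ → E} {l b T : ℝ} (hl : l < 0)
    (hu : ∀ t ≥ T, HasDerivAt u (l • u t + f t) t) (hf : ∀ t ≥ T, ‖f t‖ ≤ b) :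
    ∀ t ≥ T, ‖u t‖ ^ 2 ≤ gronwallBound (‖u T‖ ^ 2) l (b ^ 2 / -l) (t - T) := by
  intro t ht
  have hsq : ∀ s ≥ T, HasDerivAt (fun s => ‖u s‖ ^ 2) (2 * inner ℝ (u s) (l • u s + f s)) s :=
    fun s hs => (hu s hs).norm_sq
  refine le_gronwallBound_of_liminf_deriv_right_le
    (f' := fun s => 2 * inner ℝ (u s) (l • u s + f s))
    (fun s hs => (hsq s hs.1).continuousAt.continuousWithinAt)
    (fun s hs _ hr => (hsq s hs.1).hasDerivWithinAt.liminf_right_slope_le hr) le_rfl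
    (fun s hs => ?_) t ⟨ht, le_rfl⟩
  have hcs : inner ℝ (u s) (f s) ≤ ‖u s‖ * b :=
    (real_inner_le_norm _ _).trans (mul_le_mul_of_nonneg_left (hf s hs.1) (norm_nonneg _))
  rw [inner_add_right, real_inner_smul_right, real_inner_self_eq_norm_sq]
  have hsplit : b ^ 2 / -l = (l * ‖u s‖ + b) ^ 2 / -l + l * ‖u s‖ ^ 2 + 2 * ‖u s‖ * b := by
    field_simp [hl.ne]
    ring
  have hnonneg : 0 ≤ (l * ‖u s‖ + b) ^ 2 / -l := div_nonneg (sq_nonneg _) (neg_nonneg.2 hl.le)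
  rw [hsplit]
  linarith

theorem tendsto_zero_of_hasDerivAt_smul_add {u f : ℝ → E} {l : ℝ} (hl : l < 0)
    (hu : ∀ t, HasDerivAt u (l • u t + f t) t) (hf : Tendsto f atTop (𝓝 0)) :
    Tendsto u atTop (𝓝 0) := by
  rw [NormedAddGroup.tendsto_nhds_zero]
  intro ε hε
  set b := -l * ε / 2
  have hb : 0 < b := div_pos (mul_pos (neg_pos.2 hl) hε) two_pos
  obtain ⟨T, hT⟩ := eventually_atTop.1
    ((NormedAddGroup.tendsto_nhds_zero.1 hf b hb).mono fun _ h => h.le)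
  have hbound : Tendsto (fun t => gronwallBound (‖u T‖ ^ 2) l (b ^ 2 / -l) (t - T)) atTop
      (𝓝 (ε ^ 2 / 4)) := by
    have hshift : Tendsto (fun t => t - T) atTop atTop := by
      simpa only [sub_eq_add_neg, id] using tendsto_atTop_add_const_right atTop (-T) tendsto_id
    have hlim : -(b ^ 2 / -l) / l = ε ^ 2 / 4 := by
      simp only [b]
      field_simp [hl.ne]
      ring
    rw [← hlim]
    exact (tendsto_gronwallBound_atTop hl).comp hshift
  filter_upwards [hbound.eventually_lt_const (by nlinarith : ε ^ 2 / 4 < ε ^ 2),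
    eventually_ge_atTop T] with t hlt ht
  have := norm_sq_le_gronwallBound_of_hasDerivAt hl (fun t _ => hu t) hT t ht
  exact lt_of_pow_lt_pow_left₀ 2 hε.le (by linarith)

theorem tendsto_iteratedDeriv_of_diffOp_prod_eq_zero (s : Multiset ℝ) (hs : ∀ r ∈ s, r < 0)
    {u : ℝ → E} (hu : ContDiff ℝ (Multiset.card s) u)
    (hp : ∀ᶠ t in atTop, diffOp u t (s.map (X - C ·)).prod = 0) {k : ℕ}
    (hk : k ≤ Multiset.card s) : Tendsto (iteratedDeriv k u) atTop (𝓝 0) := by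
  induction s using Multiset.induction_on generalizing u k with
  | empty =>
    obtain rfl : k = 0 := by simpa using hk
    refine tendsto_const_nhds.congr' (hp.mono fun t ht => ?_)
    simpa [← diffOp_X_pow u t 0] using ht.symm
  | cons a s ih =>
    rw [Multiset.card_cons] at hk
    rw [Multiset.card_cons, Nat.cast_add, Nat.cast_one] at hu
    have hu' : ContDiff ℝ ((s.map (X - C ·)).prod.natDegree + 1) u := by
      rwa [natDegree_multiset_prod_X_sub_C_eq_card]
    have hv : ContDiff ℝ (Multiset.card s) (deriv u - a • u) :=
      (contDiff_succ_iff_deriv.1 hu).2.2.sub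
        ((hu.of_le (by exact_mod_cast le_self_add)).const_smul a)
    have ihv : ∀ j ≤ Multiset.card s, Tendsto (iteratedDeriv j (deriv u - a • u)) atTop (𝓝 0) :=
      fun j hj => ih (fun r hr => hs r (Multiset.mem_cons_of_mem hr)) hv (hp.mono fun t ht => by
        rwa [Multiset.map_cons, Multiset.prod_cons, diffOp_X_sub_C_mul hu'] at ht) hj
    have hu0 : Tendsto u atTop (𝓝 0) := by
      refine tendsto_zero_of_hasDerivAt_smul_add (hs a (Multiset.mem_cons_self a s))
        (fun t => ?_) (by simpa using ihv 0 (Nat.zero_le _))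
      convert ((contDiff_succ_iff_deriv.1 hu).1 t).hasDerivAt using 1
      simp
    induction k with
    | zero => simpa using hu0
    | succ k ihk =>
      have hk' : k ≤ Multiset.card s := Nat.le_of_succ_le_succ hk
      have hD : iteratedDeriv (k + 1) u =
          iteratedDeriv k (deriv u - a • u) + a • iteratedDeriv k u := by
        ext t
        rw [Pi.add_apply, iteratedDeriv_deriv_sub_smul (hu.of_le (by exact_mod_cast hk)),
          Pi.smul_apply, sub_add_cancel]
      have hlim := (ihv k hk').add ((ihk (by omega)).const_smul a)
      rw [smul_zero, add_zero] at hlim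
      rwa [hD]

theorem tendsto_iteratedDeriv_sub_of_linear_ode {n : ℕ} (hn : 0 < n) {lam : Fin n → ℝ}
    (hlam : ∀ k, lam k < 0) {c : ℕ → ℝ}
    (hc : ∏ k : Fin n, (X - C (lam k)) = X ^ n + ∑ k ∈ Finset.range n, C (c k) * X ^ k)
    {g : E} {x : ℝ → E} (hx : ContDiff ℝ n x)
    (hode : ∀ t : ℝ, 0 ≤ t →
      iteratedDeriv n x t = -(∑ k ∈ Finset.Ico 1 n, c k • iteratedDeriv k x t) - c 0 • (x t - g))
    {k : ℕ} (hk : k ≤ n) :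
    Tendsto (iteratedDeriv k fun t => x t - g) atTop (𝓝 0) := by
  set s := Finset.univ.val.map lam
  have hs : ∏ k : Fin n, (X - C (lam k)) = (s.map (X - C ·)).prod := by
    rw [Finset.prod_eq_multiset_prod, Multiset.map_map]
    rfl
  have hcard : Multiset.card s = n := by simp [s]
  refine tendsto_iteratedDeriv_of_diffOp_prod_eq_zero s (by simpa [s] using hlam)
    (hcard ▸ hx.sub contDiff_const) ?_ (hcard ▸ hk)
  filter_upwards [eventually_ge_atTop 0] with t ht
  have hD : ∀ k ∈ Finset.Ico 1 n, iteratedDeriv k (fun t => x t - g) = iteratedDeriv k x :=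
    fun k hk => iteratedDeriv_sub_const (by grind) x g
  rw [← hs, hc, map_add, map_sum, diffOp_X_pow, Finset.sum_range_eq_add_Ico _ hn]
  simp only [diffOp_C_mul_X_pow, iteratedDeriv_sub_const hn.ne', iteratedDeriv_zero]
  rw [Finset.sum_congr rfl fun k hk => by rw [hD k hk], hode t ht]
  abel

end InnerProductSpace

theorem coeff_zero_ne_zero_of_prod_X_sub_C_eq_sum {R ι : Type*} [CommRing R] [IsDomain R]
    {s : Finset ι} {r : ι → R} (hr : ∀ i ∈ s, r i ≠ 0) {n : ℕ} (hn : 0 < n) {a : ℕ → R}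
    (h : ∏ i ∈ s, (X - C (r i)) = ∑ k ∈ Finset.range n, C (a k) * X ^ k) : a 0 ≠ 0 := by
  have h0 := congrArg (eval 0) h
  simp only [eval_prod, eval_sub, eval_X, eval_C, zero_sub, eval_finsetSum, eval_mul, eval_pow]
    at h0
  rw [Finset.sum_eq_single_of_mem 0 (Finset.mem_range.2 hn) fun k _ hk => by simp [hk]] at h0
  rw [pow_zero, mul_one] at h0
  rw [← h0, Finset.prod_ne_zero_iff]
  exact fun i hi => neg_ne_zero.2 (hr i hi)

theorem tendsto_iSup_nhds_zero {α ι : Type*} [Finite ι] {l : Filter α} {f : ι → α → ℝ}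
    (hf0 : ∀ i a, 0 ≤ f i a) (hf : ∀ i, Tendsto (f i) l (𝓝 0)) :
    Tendsto (fun a => ⨆ i, f i a) l (𝓝 0) := by
  have := Fintype.ofFinite ι
  refine squeeze_zero (fun a => Real.iSup_nonneg (hf0 · a))
    (fun a => Real.iSup_le (fun i => Finset.single_le_sum (fun j _ => hf0 j a) (Finset.mem_univ i))
      (Finset.sum_nonneg fun j _ => hf0 j a)) ?_
  simpa using tendsto_finsetSum Finset.univ fun i _ => hf i

theorem vandermonde_simplex_radius_decay_general {d n : ℕ}
    (lam : Fin n → ℝ) (hlam : ∀ k, lam k < 0)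
    (c c' : ℕ → ℝ)
    (hc : ∏ k : Fin n, (X - C (lam k)) =
      X ^ n + ∑ k ∈ Finset.range n, C (c k) * X ^ k)
    (j : Fin n)
    (hc' : ∏ k ∈ Finset.univ.erase j, (X - C (lam k)) =
      ∑ k ∈ Finset.range n, C (c' k) * X ^ k)
    (g : EuclideanSpace ℝ (Fin d)) (x : ℝ → EuclideanSpace ℝ (Fin d))
    (hx : ContDiff ℝ (n : ℕ∞) x)
    (hode : ∀ t : ℝ, 0 ≤ t →
      iteratedDeriv n x t =
        -(∑ k ∈ Finset.Ico 1 n, c k • iteratedDeriv k x t) - c 0 • (x t - g)) :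
    Filter.Tendsto (fun t : ℝ => ⨆ m : Fin n,
        ‖g - ∑ k ∈ Finset.range ((m : ℕ) + 1), (c' k / c' 0) • iteratedDeriv k x t‖)
      Filter.atTop (nhds 0) := by
  refine tendsto_iSup_nhds_zero (fun _ _ => norm_nonneg _) fun m => ?_
  have hn : 0 < n := m.pos
  have hc'0 : c' 0 ≠ 0 :=
    coeff_zero_ne_zero_of_prod_X_sub_C_eq_sum (fun k _ => (hlam k).ne) hn hc'
  have hdecay : ∀ k ∈ Finset.range (m + 1),
      Tendsto (iteratedDeriv k fun t => x t - g) atTop (𝓝 0) := fun k hk =>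
    tendsto_iteratedDeriv_sub_of_linear_ode hn hlam hc (by exact_mod_cast hx) hode
      (by have := Finset.mem_range.1 hk; omega)
  simp_rw [sub_sum_smul_iteratedDeriv (a := fun k => c' k / c' 0) (div_self hc'0), norm_neg]
  simpa using (tendsto_finsetSum _ fun k hk => (hdecay k hk).const_smul (c' k / c' 0)).norm

/-- Asymptotic decay of the Vandermonde simplex radius (decay part of Lemma 2):
along the PhD closed-loop trajectory, the Vandermonde simplex radius
`max_m ‖g − Σ_{k=0}^m (c'_k/c'_0)·x⁽ᵏ⁾(t)‖` tends to zero. -/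
theorem vandermonde_simplex_radius_decay {d n : ℕ} (hn : 1 ≤ n)
    (lam : Fin n → ℝ) (hlam : ∀ k, lam k < 0)
    (c c' : ℕ → ℝ)
    (hc : ∏ k : Fin n, (X - C (lam k)) =
      X ^ n + ∑ k ∈ Finset.range n, C (c k) * X ^ k)
    (j : Fin n) (hj : ∀ k, lam k ≤ lam j)
    (hc' : ∏ k ∈ Finset.univ.erase j, (X - C (lam k)) =
      ∑ k ∈ Finset.range n, C (c' k) * X ^ k)
    (g : EuclideanSpace ℝ (Fin d)) (x : ℝ → EuclideanSpace ℝ (Fin d))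
    (hx : ContDiff ℝ (n : ℕ∞) x)
    (hode : ∀ t : ℝ, 0 ≤ t →
      iteratedDeriv n x t =
        -(∑ k ∈ Finset.Ico 1 n, c k • iteratedDeriv k x t) - c 0 • (x t - g)) :
    Filter.Tendsto (fun t : ℝ => ⨆ m : Fin n,
        ‖g - ∑ k ∈ Finset.range ((m : ℕ) + 1), (c' k / c' 0) • iteratedDeriv k x t‖)
      Filter.atTop (nhds 0) :=
  vandermonde_simplex_radius_decay_general lam hlam c c' hc j hc' g x hx hode
end
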